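/- If a 3×3 matrix B is skew-symmetric, then I₃ + B is invertible and exp(B) ∈ SO(3); moreover for B = θ ñ with ‖n‖ = 1, the quaternion P = (cos(θ/2), sin(θ/2) n) satisfies A(P) = exp(θ ñ). -/

import Mathlib

open Matrix

/-- The cross-product (skew-symmetric) matrix `p̃` with `p̃ r = p × r`. -/
noncomputable def skew (p : Fin 3 → ℝ) : Matrix (Fin 3) (Fin 3) ℝ :=
  !![0, -p 2, p 1; p 2, 0, -p 0; -p 1, p 0, 0]

/-- The rotation matrix of a unit quaternion, `A(P) = I₃ + 2((p̃)² + p₀ p̃)`. -/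
noncomputable def AmatUnit (p0 : ℝ) (p : Fin 3 → ℝ) : Matrix (Fin 3) (Fin 3) ℝ :=
  1 + (2:ℝ) • (skew p * skew p + p0 • skew p)

/-!
For a skew-symmetric `B`, `vᵀ B v = 0`, so `(I + B) v = 0` forces `‖v‖² = 0`; `exp Bᵀ = exp (-B)`
is the inverse of `exp B`, and `det (exp B) = det (exp (B / 2))² > 0` together with
`det (exp B)² = 1` gives `det (exp B) = 1`. For a unit vector `n`, `ñ³ = -ñ`, so
`t ↦ I + sin t ñ + (1 - cos t) ñ²` solves `R' = ñ R`, `R 0 = I`, and is therefore `exp (t ñ)`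
(Rodrigues' formula); the half-angle formulas turn `A(P)` into the same expression.
-/

open NormedSpace

section SkewSymmetric

variable {m : Type*} [Fintype m] [DecidableEq m]

theorem Matrix.isUnit_one_add_of_transpose_eq_neg {R : Type*} [Field R] [LinearOrder R]
    [IsStrictOrderedRing R] {B : Matrix m m R} (hB : Bᵀ = -B) : IsUnit (1 + B) := by
  rw [isUnit_iff_isUnit_det, isUnit_iff_ne_zero, ne_eq, ← exists_mulVec_eq_zero_iff]
  rintro ⟨v, hv, hBv⟩
  have hskew : v ⬝ᵥ (B *ᵥ v) = 0 := by
    have : v ⬝ᵥ (B *ᵥ v) = -(v ⬝ᵥ (B *ᵥ v)) :=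
      calc v ⬝ᵥ (B *ᵥ v) = (Bᵀ *ᵥ v) ⬝ᵥ v := by rw [mulVec_transpose, dotProduct_mulVec]
        _ = -(v ⬝ᵥ (B *ᵥ v)) := by rw [hB, neg_mulVec, neg_dotProduct, dotProduct_comm]
    linarith
  have hvv : v ⬝ᵥ v = 0 := by
    simpa [add_mulVec, dotProduct_add, hskew] using congrArg (v ⬝ᵥ ·) hBv
  exact hv (dotProduct_self_eq_zero.mp hvv)

theorem Matrix.transpose_exp_mul_exp_of_transpose_eq_neg {𝔸 : Type*} [NormedCommRing 𝔸]
    [NormedAlgebra ℚ 𝔸] [CompleteSpace 𝔸] {B : Matrix m m 𝔸} (hB : Bᵀ = -B) :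
    (exp B)ᵀ * exp B = 1 := by
  rw [← exp_transpose, hB, ← exp_add_of_commute _ _ (Commute.refl B).neg_left, neg_add_cancel,
    exp_zero]

theorem Matrix.det_exp_pos (A : Matrix m m ℝ) : 0 < (exp A).det := by
  have hhalf : exp A = exp ((1 / 2 : ℝ) • A) * exp ((1 / 2 : ℝ) • A) := by
    rw [← exp_add_of_commute _ _ (Commute.refl _), ← add_smul]
    norm_num
  have hunit : IsUnit (exp ((1 / 2 : ℝ) • A)) := isUnit_exp _
  rw [hhalf, det_mul, ← sq]
  exact pow_two_pos_of_ne_zero ((isUnit_iff_isUnit_det _).mp hunit).ne_zero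

theorem Matrix.det_exp_of_transpose_eq_neg {B : Matrix m m ℝ} (hB : Bᵀ = -B) :
    (exp B).det = 1 := by
  have hsq : (exp B).det ^ 2 = 1 := by
    simpa [sq] using congrArg det (transpose_exp_mul_exp_of_transpose_eq_neg hB)
  nlinarith [det_exp_pos B]

end SkewSymmetric

section BanachAlgebra

variable {𝔸 : Type*} [NormedRing 𝔸] [NormedAlgebra ℝ 𝔸] [CompleteSpace 𝔸]

theorem eq_exp_smul_mul_of_hasDerivAt {f : ℝ → 𝔸} {a : 𝔸}
    (hf : ∀ t, HasDerivAt f (a * f t) t) (t : ℝ) : f t = exp (t • a) * f 0 := by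
  set g : ℝ → 𝔸 := fun s => exp (s • -a) * f s
  have hg : ∀ s, HasDerivAt g 0 s := by
    intro s
    refine ((hasDerivAt_exp_smul_const' (-a) s).mul (hf s)).congr_deriv ?_
    rw [← mul_assoc (exp _), ← ((Commute.refl a).neg_right.smul_right s).exp_right.eq, neg_mul,
      neg_mul, neg_add_cancel]
  have hconst : g t = g 0 :=
    is_const_of_deriv_eq_zero (fun s => (hg s).differentiableAt) (fun s => (hg s).deriv) t 0
  have hinv : exp (t • a) * exp (t • -a) = 1 := by
    have hball : ∀ x : 𝔸, x ∈ Metric.eball 0 (expSeries ℝ 𝔸).radius := fun x =>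
      (expSeries_radius_eq_top ℝ 𝔸).symm ▸ edist_lt_top _ _
    rw [smul_neg, ← exp_add_of_commute_of_mem_ball (Commute.refl _).neg_right (hball _) (hball _),
      add_neg_cancel, exp_zero]
  calc f t = exp (t • a) * g t := by rw [← mul_assoc, hinv, one_mul]
    _ = exp (t • a) * f 0 := by rw [hconst]; simp [g]

theorem exp_smul_eq_of_pow_three_eq_neg {K : 𝔸} (hK : K ^ 3 = -K) (θ : ℝ) :
    exp (θ • K) = 1 + Real.sin θ • K + (1 - Real.cos θ) • K ^ 2 := by
  set R : ℝ → 𝔸 := fun t => 1 + Real.sin t • K + (1 - Real.cos t) • K ^ 2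
  have hR : ∀ t, HasDerivAt R (K * R t) t := by
    intro t
    have hK' : K * K ^ 2 = -K := by rw [← pow_succ', hK]
    refine ((((Real.hasDerivAt_sin t).smul_const K).const_add 1).add
      (((Real.hasDerivAt_cos t).const_sub 1).smul_const (K ^ 2))).congr_deriv ?_
    simp only [R, mul_add, mul_one, mul_smul_comm, hK', ← sq, neg_neg]
    module
  simpa [R] using (eq_exp_smul_mul_of_hasDerivAt hR θ).symm

end BanachAlgebra

theorem skew_smul (t : ℝ) (n : Fin 3 → ℝ) : skew (t • n) = t • skew n := by
  ext i j
  fin_cases i <;> fin_cases j <;> simp [skew]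

theorem skew_pow_three (n : Fin 3 → ℝ) :
    skew n ^ 3 = -(n 0 ^ 2 + n 1 ^ 2 + n 2 ^ 2) • skew n := by
  ext i j
  simp only [pow_succ, pow_zero, one_mul, skew, mul_fin_three]
  fin_cases i <;> fin_cases j <;> simp <;> ring

open scoped Matrix.Norms.Operator in
theorem exp_smul_skew {n : Fin 3 → ℝ} (hn : n 0 ^ 2 + n 1 ^ 2 + n 2 ^ 2 = 1) (θ : ℝ) :
    exp (θ • skew n) = 1 + Real.sin θ • skew n + (1 - Real.cos θ) • skew n ^ 2 :=
  exp_smul_eq_of_pow_three_eq_neg (by rw [skew_pow_three, hn, neg_one_smul]) θ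

theorem amatUnit_half_angle (θ : ℝ) (n : Fin 3 → ℝ) :
    AmatUnit (Real.cos (θ / 2)) (Real.sin (θ / 2) • n) =
      1 + Real.sin θ • skew n + (1 - Real.cos θ) • skew n ^ 2 := by
  have hsin : Real.sin θ = 2 * Real.sin (θ / 2) * Real.cos (θ / 2) := by
    rw [← Real.sin_two_mul, mul_div_cancel₀ θ two_ne_zero]
  have hcos : 1 - Real.cos θ = 2 * Real.sin (θ / 2) ^ 2 := by
    rw [Real.sin_sq_eq_half_sub, mul_div_cancel₀ θ two_ne_zero]
    ring
  rw [AmatUnit, skew_smul, smul_mul_smul_comm, hsin, hcos, sq (skew n)]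
  module

/-- If `B` is skew-symmetric then `I₃ + B` is invertible and `exp(B) ∈ SO(3)`; moreover, for
`B = θ ñ` with `‖n‖ = 1`, the quaternion `P = (cos(θ/2), sin(θ/2) n)` satisfies
`A(P) = exp(θ ñ)`. -/
theorem stmt_18 :
    (∀ B : Matrix (Fin 3) (Fin 3) ℝ, Bᵀ = -B →
      IsUnit (1 + B) ∧
      (NormedSpace.exp B)ᵀ * NormedSpace.exp B = 1 ∧
      (NormedSpace.exp B).det = 1) ∧
    (∀ (θ : ℝ) (n : Fin 3 → ℝ), n 0 ^ 2 + n 1 ^ 2 + n 2 ^ 2 = 1 →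
      AmatUnit (Real.cos (θ / 2)) (Real.sin (θ / 2) • n) =
        NormedSpace.exp (θ • skew n)) :=
  ⟨fun _ hB => ⟨isUnit_one_add_of_transpose_eq_neg hB,
      transpose_exp_mul_exp_of_transpose_eq_neg hB, det_exp_of_transpose_eq_neg hB⟩,
    fun θ _ hn => by rw [amatUnit_half_angle, exp_smul_skew hn]⟩
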